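/- arXiv:0805.3513 — 6 statements merged into one kernel-verified Lean document; each statement's English description precedes it below -/
import Mathlib

section
/- Let H be a complex Hilbert space and S an MI-space in B(H) with dim S > 1 (i.e., S contains two linearly independent operators). Then for every nonzero A ∈ S, the orthogonal complement of the range of A is infinite-dimensional. -/
/-!
For `A, B` in an MI-space `S`, each `T ∈ S` satisfies `T⋆T ∈ ℂ • 1`, and polarization of
these identities over `B + A`, `B - A`, `B + iA`, `B - iA` gives `A⋆B ∈ ℂ • 1`. Given
`A ≠ 0` and `B ∈ S` not a multiple of `A`, a suitable `C = B - λA ∈ S` is nonzero with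
`A⋆C = 0`, so `range C ⊆ (range A)ᗮ`. Since `C` is injective, a finite-dimensional
`(range A)ᗮ` would make `H` finite-dimensional; then the injective `A` is surjective and
`(range A)ᗮ = 0`, forcing `C = 0`.
-/

/-- `A` is a scalar multiple of an isometry. -/
def ScalarMultipleOfIsometry {H : Type*} [NormedAddCommGroup H] [InnerProductSpace ℂ H]
    (A : H →L[ℂ] H) : Prop :=
  ∃ (c : ℂ) (V : H →L[ℂ] H), Isometry V ∧ A = c • V

open Complex ContinuousLinearMap

theorem four_smul_star_mul {R : Type*} [Ring R] [StarRing R] [Algebra ℂ R] [StarModule ℂ R]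
    (a b : R) :
    (4 : ℂ) • (star a * b) = star (b + a) * (b + a) - star (b - a) * (b - a)
      + I • (star (b + I • a) * (b + I • a)) - I • (star (b - I • a) * (b - I • a)) := by
  simp only [star_add, star_sub, star_smul, add_mul, mul_add, sub_mul, mul_sub, smul_mul_assoc,
    mul_smul_comm, Complex.star_def, Complex.conj_I]
  match_scalars <;> ring_nf <;> simp only [I_sq] <;> ring

theorem Submodule.exists_mem_notMem_span_singleton {K V : Type*} [Field K] [AddCommGroup V]
    [Module K V] {S : Submodule K V} {a b : V} (ha : a ∈ S) (hb : b ∈ S)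
    (hab : LinearIndependent K ![a, b]) (x : V) : ∃ y ∈ S, y ∉ K ∙ x := by
  by_contra! h
  obtain ⟨s, rfl⟩ := mem_span_singleton.mp (h a ha)
  obtain ⟨t, rfl⟩ := mem_span_singleton.mp (h b hb)
  obtain ⟨-, hs⟩ := LinearIndependent.pair_iff.mp hab t (-s) (by
    rw [smul_smul, smul_smul, neg_mul, neg_smul, mul_comm, add_neg_cancel])
  exact hab.ne_zero 0 (by simp [neg_eq_zero.mp hs])

section

variable {H : Type*} [NormedAddCommGroup H] [InnerProductSpace ℂ H]

theorem ScalarMultipleOfIsometry.injective {T : H →L[ℂ] H} (hT : ScalarMultipleOfIsometry T)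
    (h0 : T ≠ 0) : Function.Injective T := by
  obtain ⟨c, V, hV, rfl⟩ := hT
  have hc : c ≠ 0 := by rintro rfl; exact h0 (zero_smul ℂ V)
  exact (smul_right_injective H hc).comp hV.injective

variable [CompleteSpace H]

theorem ScalarMultipleOfIsometry.star_mul_self_mem_bot {T : H →L[ℂ] H}
    (hT : ScalarMultipleOfIsometry T) : star T * T ∈ (⊥ : Subalgebra ℂ (H →L[ℂ] H)) := by
  obtain ⟨c, V, hV, rfl⟩ := hT
  have : star V * V = 1 := (isometry_iff_adjoint_comp_self V).mp hV
  rw [star_smul, smul_mul_smul_comm, this]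
  exact Subalgebra.smul_mem _ (Subalgebra.one_mem _) _

theorem star_mul_mem_bot_of_forall_scalarMultipleOfIsometry {S : Submodule ℂ (H →L[ℂ] H)}
    (hS : ∀ T ∈ S, ScalarMultipleOfIsometry T) {A B : H →L[ℂ] H} (hA : A ∈ S) (hB : B ∈ S) :
    star A * B ∈ (⊥ : Subalgebra ℂ (H →L[ℂ] H)) := by
  have h4 : (4 : ℂ) • (star A * B) ∈ (⊥ : Subalgebra ℂ (H →L[ℂ] H)) := by
    rw [four_smul_star_mul]
    refine sub_mem (add_mem (sub_mem ?_ ?_) (Subalgebra.smul_mem _ ?_ _))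
      (Subalgebra.smul_mem _ ?_ _)
    all_goals refine (hS _ ?_).star_mul_self_mem_bot
    · exact S.add_mem hB hA
    · exact S.sub_mem hB hA
    · exact S.add_mem hB (S.smul_mem _ hA)
    · exact S.sub_mem hB (S.smul_mem _ hA)
  simpa [smul_smul] using Subalgebra.smul_mem _ h4 (4⁻¹ : ℂ)

theorem range_le_orthogonal_range_of_star_mul_eq_zero {A B : H →L[ℂ] H}
    (h : star A * B = 0) :
    LinearMap.range (B : H →ₗ[ℂ] H) ≤ (LinearMap.range (A : H →ₗ[ℂ] H))ᗮ := by
  rw [orthogonal_range, LinearMap.range_le_ker_iff, ← toLinearMap_comp, ← star_eq_adjoint,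
    ← mul_def, h]
  rfl

end

theorem not_finiteDimensional_orthogonal_range {E : Type*} [NormedAddCommGroup E]
    [InnerProductSpace ℂ E]
    {A B : E →L[ℂ] E} (hA : Function.Injective A) (hB : Function.Injective B) (hB0 : B ≠ 0)
    (h : LinearMap.range (B : E →ₗ[ℂ] E) ≤ (LinearMap.range (A : E →ₗ[ℂ] E))ᗮ) :
    ¬ FiniteDimensional ℂ (LinearMap.range (A : E →ₗ[ℂ] E))ᗮ := by
  intro hfin
  have : FiniteDimensional ℂ (LinearMap.range (B : E →ₗ[ℂ] E)) :=
    Submodule.finiteDimensional_of_le h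
  have : FiniteDimensional ℂ E :=
    (LinearEquiv.ofInjective (B : E →ₗ[ℂ] E) hB).symm.finiteDimensional
  have htop : LinearMap.range (A : E →ₗ[ℂ] E) = ⊤ :=
    LinearMap.range_eq_top.mpr (LinearMap.injective_iff_surjective.mp hA)
  rw [htop, Submodule.top_orthogonal_eq_bot, le_bot_iff, LinearMap.range_eq_bot] at h
  exact hB0 (ContinuousLinearMap.coe_injective h)

theorem stmt_4 {H : Type*} [NormedAddCommGroup H] [InnerProductSpace ℂ H] [CompleteSpace H]
    (S : Submodule ℂ (H →L[ℂ] H))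
    (hS : ∀ T ∈ S, ScalarMultipleOfIsometry T)
    (hdim : ∃ A ∈ S, ∃ B ∈ S, LinearIndependent ℂ ![A, B]) :
    ∀ A ∈ S, A ≠ 0 → ¬ FiniteDimensional ℂ (LinearMap.range (A : H →ₗ[ℂ] H))ᗮ := by
  intro A hA hA0
  obtain ⟨A₀, hA₀, B₀, hB₀, hind⟩ := hdim
  obtain ⟨B, hB, hBA⟩ := S.exists_mem_notMem_span_singleton hA₀ hB₀ hind A
  obtain ⟨α, hα⟩ :=
    Algebra.mem_bot.mp (star_mul_mem_bot_of_forall_scalarMultipleOfIsometry hS hA hA)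
  obtain ⟨β, hβ⟩ :=
    Algebra.mem_bot.mp (star_mul_mem_bot_of_forall_scalarMultipleOfIsometry hS hA hB)
  have hα0 : α ≠ 0 := by
    rintro rfl
    exact hA0 (CStarRing.star_mul_self_eq_zero_iff A |>.mp (by simpa using hα.symm))
  set C := B - (β / α) • A
  have hC : C ∈ S := S.sub_mem hB (S.smul_mem _ hA)
  have hC0 : C ≠ 0 := fun h =>
    hBA (Submodule.mem_span_singleton.mpr ⟨β / α, (sub_eq_zero.mp h).symm⟩)
  have hAC : star A * C = 0 := by
    simp only [C, mul_sub, mul_smul_comm, ← hα, ← hβ, Algebra.algebraMap_eq_smul_one, smul_smul,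
      div_mul_cancel₀ _ hα0, sub_self]
  exact not_finiteDimensional_orthogonal_range ((hS A hA).injective hA0) ((hS C hC).injective hC0)
    hC0 (range_le_orthogonal_range_of_star_mul_eq_zero hAC)
end

section
/- Let H be a complex Hilbert space and S an MI-space in B(H). If the identity operator I belongs to S, then S = ℂ·I, the set of all scalar multiples of I. -/
open RCLike

theorem ScalarMultipleOfIsometry.exists_norm_apply_eq {H : Type*} [NormedAddCommGroup H]
    [InnerProductSpace ℂ H] {A : H →L[ℂ] H} (hA : ScalarMultipleOfIsometry A) :
    ∃ k : ℝ, ∀ x, ‖A x‖ = k * ‖x‖ := by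
  obtain ⟨c, V, hV, rfl⟩ := hA
  exact ⟨‖c‖, fun x => by
    rw [smul_apply, norm_smul, hV.norm_map_of_map_zero (map_zero V)]⟩

theorem re_inner_apply_eq_of_norm_apply_eq {𝕜 E F : Type*} [RCLike 𝕜]
    [SeminormedAddCommGroup E] [NormedSpace 𝕜 E] [NormedAddCommGroup F] [InnerProductSpace 𝕜 F]
    {A B : E →L[𝕜] F} {a b c : ℝ} (hA : ∀ x, ‖A x‖ = a * ‖x‖) (hB : ∀ x, ‖B x‖ = b * ‖x‖)
    (hAB : ∀ x, ‖(A + B) x‖ = c * ‖x‖) (x : E) :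
    re (inner 𝕜 (A x) (B x)) = (c ^ 2 - a ^ 2 - b ^ 2) / 2 * ‖x‖ ^ 2 := by
  have h := norm_add_sq (𝕜 := 𝕜) (A x) (B x)
  rw [← add_apply, hA, hB, hAB] at h
  linear_combination (-1 / 2 : ℝ) * h

theorem ContinuousLinearMap.eq_smul_one_of_inner_apply_eq {E : Type*} [NormedAddCommGroup E]
    [InnerProductSpace ℂ E] {T : E →L[ℂ] E} {μ : ℂ}
    (hT : ∀ x, inner ℂ x (T x) = μ * ‖x‖ ^ 2) : T = μ • 1 := by
  refine ContinuousLinearMap.coe_injective ((ext_inner_map _ _).mp fun x => ?_)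
  rw [ContinuousLinearMap.coe_coe, ContinuousLinearMap.coe_coe, ← inner_conj_symm, hT]
  simp [inner_smul_left, inner_self_eq_norm_sq_to_K]

theorem ContinuousLinearMap.eq_smul_one_of_re_inner_apply_eq {E : Type*} [NormedAddCommGroup E]
    [InnerProductSpace ℂ E] {T : E →L[ℂ] E} {a b : ℝ}
    (hre : ∀ x, re (inner ℂ x (T x)) = a * ‖x‖ ^ 2)
    (him : ∀ x, re (inner ℂ (Complex.I • x) (T x)) = b * ‖x‖ ^ 2) :
    T = (⟨a, b⟩ : ℂ) • 1 := by
  refine eq_smul_one_of_inner_apply_eq fun x => Complex.ext ?_ ?_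
  · simpa [← Complex.ofReal_pow] using hre x
  · simpa [inner_smul_left, ← Complex.ofReal_pow] using him x

theorem stmt_6_general {H : Type*} [NormedAddCommGroup H] [InnerProductSpace ℂ H]
    (S : Submodule ℂ (H →L[ℂ] H))
    (hS : ∀ T ∈ S, ScalarMultipleOfIsometry T)
    (hI : (1 : H →L[ℂ] H) ∈ S) :
    S = Submodule.span ℂ {(1 : H →L[ℂ] H)} := by
  refine le_antisymm (fun T hT => ?_) ((Submodule.span_singleton_le_iff_mem _ _).mpr hI)
  have scaling : ∀ A ∈ S, ∃ k : ℝ, ∀ x, ‖A x‖ = k * ‖x‖ := fun A hA =>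
    (hS A hA).exists_norm_apply_eq
  have hiI : Complex.I • (1 : H →L[ℂ] H) ∈ S := S.smul_mem _ hI
  obtain ⟨k, hk⟩ := scaling T hT
  obtain ⟨k₁, hk₁⟩ := scaling 1 hI
  obtain ⟨kᵢ, hkᵢ⟩ := scaling _ hiI
  obtain ⟨l₁, hl₁⟩ := scaling _ (S.add_mem hI hT)
  obtain ⟨lᵢ, hlᵢ⟩ := scaling _ (S.add_mem hiI hT)
  rw [ContinuousLinearMap.eq_smul_one_of_re_inner_apply_eq
    (re_inner_apply_eq_of_norm_apply_eq hk₁ hk hl₁)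
    (re_inner_apply_eq_of_norm_apply_eq hkᵢ hk hlᵢ)]
  exact Submodule.smul_mem _ _ (Submodule.mem_span_singleton_self _)

theorem stmt_6 {H : Type*} [NormedAddCommGroup H] [InnerProductSpace ℂ H] [CompleteSpace H]
    (S : Submodule ℂ (H →L[ℂ] H))
    (hS : ∀ T ∈ S, ScalarMultipleOfIsometry T)
    (hI : (1 : H →L[ℂ] H) ∈ S) :
    S = Submodule.span ℂ {(1 : H →L[ℂ] H)} :=
  stmt_6_general S hS hI
end

section
/- Let H be a complex Hilbert space and S an MI-space in B(H). If A ∈ S is nonzero and the adjoint A* also belongs to S, then S = span(A). Consequently an MI-space of dimension greater than one contains the adjoint of none of its nonzero elements. -/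
/-! Every `T` in an MI-space satisfies `T⋆ T ∈ ℂ ∙ 1`, and polarization upgrades this to
`T⋆ U ∈ ℂ ∙ 1` for all `T, U` in the space. If `A` and `A⋆` both lie in it, then `A A⋆ = s • 1`
with `s ≠ 0` by the C⋆-identity, and `A⋆ T = α • 1` gives `s • T = A A⋆ T = α • A`. -/

open Submodule

theorem ScalarMultipleOfIsometry.star_mul_self_mem_span_one {H : Type*} [NormedAddCommGroup H]
    [InnerProductSpace ℂ H] [CompleteSpace H] {T : H →L[ℂ] H} (hT : ScalarMultipleOfIsometry T) :
    star T * T ∈ ℂ ∙ (1 : H →L[ℂ] H) := by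
  obtain ⟨c, V, hV, rfl⟩ := hT
  have hVV : star V * V = 1 :=
    (ContinuousLinearMap.norm_map_iff_adjoint_comp_self V).mp
      fun x => hV.norm_map_of_map_zero (map_zero V) x
  rw [mem_span_singleton]
  exact ⟨star c * c, by rw [star_smul, smul_mul_smul_comm, hVV]⟩

theorem star_mul_mem_of_forall_star_mul_self_mem {R : Type*} [NonUnitalRing R] [StarRing R]
    [Module ℂ R] [StarModule ℂ R] [IsScalarTower ℂ R R] [SMulCommClass ℂ R R] {M N : Submodule ℂ R}
    (hM : ∀ T ∈ M, star T * T ∈ N) {T U : R} (hT : T ∈ M) (hU : U ∈ M) :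
    star T * U ∈ N := by
  have hsum : star (T + U) * (T + U) - star T * T - star U * U = star T * U + star U * T := by
    rw [star_add]
    noncomm_ring
  have hdiff : star (T + Complex.I • U) * (T + Complex.I • U) - star T * T - star U * U =
      Complex.I • (star T * U - star U * T) := by
    rw [star_add, star_smul, Complex.star_def, Complex.conj_I]
    simp only [add_mul, mul_add, smul_mul_assoc, mul_smul_comm]
    match_scalars <;> simp
  have hdiag {V : R} (hV : V ∈ M) : star (T + V) * (T + V) - star T * T - star U * U ∈ N :=
    N.sub_mem (N.sub_mem (hM _ (M.add_mem hT hV)) (hM T hT)) (hM U hU)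
  have hpolar : (2 : ℂ) • (star T * U) =
      (star T * U + star U * T) + (-Complex.I) • Complex.I • (star T * U - star U * T) := by
    match_scalars <;> norm_num
  have h2 : (2 : ℂ) • (star T * U) ∈ N := by
    rw [hpolar, ← hsum, ← hdiff]
    exact N.add_mem (hdiag hU) (N.smul_mem _ (hdiag (M.smul_mem _ hU)))
  simpa using N.smul_mem (2⁻¹ : ℂ) h2

theorem eq_span_singleton_of_star_mem {R : Type*} [NormedRing R] [StarRing R] [CStarRing R]
    [NormedAlgebra ℂ R] [StarModule ℂ R] {M : Submodule ℂ R}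
    (hM : ∀ T ∈ M, star T * T ∈ ℂ ∙ (1 : R)) {A : R} (hA : A ∈ M) (hA0 : A ≠ 0)
    (hAstar : star A ∈ M) :
    M = ℂ ∙ A := by
  obtain ⟨s, hs⟩ := mem_span_singleton.mp (star_star A ▸ hM _ hAstar)
  have hs0 : s ≠ 0 := by
    rintro rfl
    exact hA0 ((CStarRing.mul_star_self_eq_zero_iff A).mp (by rw [← hs, zero_smul]))
  refine le_antisymm (fun T hT => ?_) ((span_singleton_le_iff_mem A M).mpr hA)
  obtain ⟨α, hα⟩ := mem_span_singleton.mp (star_mul_mem_of_forall_star_mul_self_mem hM hA hT)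
  have hsT : s • T = α • A := by
    rw [← one_mul T, ← smul_mul_assoc, hs, mul_assoc, ← hα, mul_smul_comm, mul_one]
  rw [mem_span_singleton]
  exact ⟨s⁻¹ * α, by rw [mul_smul, ← hsT, smul_smul, inv_mul_cancel₀ hs0, one_smul]⟩

theorem stmt_11 {H : Type*} [NormedAddCommGroup H] [InnerProductSpace ℂ H] [CompleteSpace H]
    (S : Submodule ℂ (H →L[ℂ] H))
    (hS : ∀ T ∈ S, ScalarMultipleOfIsometry T)
    (A : H →L[ℂ] H) (hA : A ∈ S) (hA0 : A ≠ 0)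
    (hAstar : ContinuousLinearMap.adjoint A ∈ S) :
    S = Submodule.span ℂ {A} :=
  eq_span_singleton_of_star_mem (fun T hT => (hS T hT).star_mul_self_mem_span_one) hA hA0 hAstar
end

section
/- Let H be a complex Hilbert space, S an MI-space in B(H), and A ∈ S a nonzero operator. Then for B ∈ B(H), the product A∘B belongs to S if and only if B is a scalar multiple of the identity; that is, {B ∈ B(H) : AB ∈ S} = ℂ·I. -/
open scoped InnerProductSpace

section

variable {E : Type*} [NormedAddCommGroup E] [InnerProductSpace ℂ E]

/-- `P† Q ∈ ℂ·I`, phrased through inner products so that no adjoint, hence no completeness, is needed. -/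
def InnerProportional (P Q : E →L[ℂ] E) : Prop :=
  ∃ μ : ℂ, ∀ x y, ⟪P x, Q y⟫_ℂ = μ * ⟪x, y⟫_ℂ

theorem ScalarMultipleOfIsometry.innerProportional_self {T : E →L[ℂ] E}
    (h : ScalarMultipleOfIsometry T) : InnerProportional T T := by
  obtain ⟨c, V, hV, rfl⟩ := h
  let W : E →ₗᵢ[ℂ] E := ⟨V.toLinearMap, hV.norm_map_of_map_zero (map_zero V)⟩
  refine ⟨starRingEnd ℂ c * c, fun x y => ?_⟩
  simp only [smul_apply, inner_smul_left, inner_smul_right]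
  rw [show ⟪V x, V y⟫_ℂ = ⟪x, y⟫_ℂ from W.inner_map_map x y]
  ring

theorem innerProportional_of_mem (S : Submodule ℂ (E →L[ℂ] E))
    (hS : ∀ T ∈ S, InnerProportional T T) {P Q : E →L[ℂ] E} (hP : P ∈ S) (hQ : Q ∈ S) :
    InnerProportional P Q := by
  obtain ⟨a, ha⟩ := hS P hP
  obtain ⟨b, hb⟩ := hS Q hQ
  obtain ⟨c, hc⟩ := hS (P + Q) (S.add_mem hP hQ)
  obtain ⟨d, hd⟩ := hS (P + Complex.I • Q) (S.add_mem hP (S.smul_mem _ hQ))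
  -- polarization: `2 P† Q = (c - a - b) - i (d - a - b)` with the constants of `P, Q, P + Q, P + iQ`
  refine ⟨((c - a - b) - Complex.I * (d - a - b)) / 2, fun x y => ?_⟩
  have hsum := hc x y
  have hisum := hd x y
  simp only [add_apply, smul_apply,
    inner_add_left, inner_add_right, inner_smul_left, inner_smul_right,
    Complex.conj_I] at hsum hisum
  linear_combination (1 / 2 : ℂ) * (hsum - ha x y - hb x y)
    - (Complex.I / 2) * (hisum - ha x y - hb x y)
    + (⟪P x, Q y⟫_ℂ / 2 - ⟪Q x, P y⟫_ℂ / 2 - Complex.I / 2 * ⟪Q x, Q y⟫_ℂ) * Complex.I_mul_I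

theorem InnerProportional.exists_eq_smul_one {A B : E →L[ℂ] E} (hA : InnerProportional A A)
    (hA0 : A ≠ 0) (hAB : InnerProportional A (A * B)) : ∃ c : ℂ, B = c • 1 := by
  obtain ⟨a, ha⟩ := hA
  obtain ⟨μ, hμ⟩ := hAB
  have ha0 : a ≠ 0 := by
    rintro rfl
    refine hA0 (ContinuousLinearMap.ext fun x => ?_)
    simpa using ha x x
  refine ⟨μ / a, ContinuousLinearMap.ext fun y => ?_⟩
  have hBy : a • B y = μ • y := ext_inner_left ℂ fun x => by
    rw [inner_smul_right, inner_smul_right, ← ha, ← hμ]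
    rfl
  simp [div_eq_inv_mul, ← smul_smul, ← hBy, ha0]

end

theorem stmt_12_general {H : Type*} [NormedAddCommGroup H] [InnerProductSpace ℂ H]
    (S : Submodule ℂ (H →L[ℂ] H))
    (hS : ∀ T ∈ S, ScalarMultipleOfIsometry T)
    (A : H →L[ℂ] H) (hA : A ∈ S) (hA0 : A ≠ 0) :
    {B : H →L[ℂ] H | A * B ∈ S} = {B : H →L[ℂ] H | ∃ c : ℂ, B = c • 1} := by
  have hS' : ∀ T ∈ S, InnerProportional T T := fun T hT => (hS T hT).innerProportional_self
  ext B
  constructor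
  · intro hB
    exact (hS' A hA).exists_eq_smul_one hA0 (innerProportional_of_mem S hS' hA hB)
  · rintro ⟨c, rfl⟩
    change A * (c • 1) ∈ S
    rw [mul_smul_comm, mul_one]
    exact S.smul_mem c hA

theorem stmt_12 {H : Type*} [NormedAddCommGroup H] [InnerProductSpace ℂ H] [CompleteSpace H]
    (S : Submodule ℂ (H →L[ℂ] H))
    (hS : ∀ T ∈ S, ScalarMultipleOfIsometry T)
    (A : H →L[ℂ] H) (hA : A ∈ S) (hA0 : A ≠ 0) :
    {B : H →L[ℂ] H | A * B ∈ S} = {B : H →L[ℂ] H | ∃ c : ℂ, B = c • 1} :=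
  stmt_12_general S hS A hA hA0
end

section
/- Let H be a complex Hilbert space and S an MI-space in B(H) with S ≠ ℂ·I (S is not the set of scalar multiples of the identity). If A, B ∈ S with A ≠ 0, then the product A∘B belongs to S if and only if B = 0. -/
open scoped ComplexInnerProductSpace

/-!
Every `T` in an MI-space satisfies `T* T = r • 1`, and polarizing this identity over `T + U` and
`T + i U` shows that `T* U` is a scalar for all `T, U` in the space. If `A ≠ 0` and `A B` lie in
the space, then `A* A = a • 1` with `a ≠ 0` and `A* (A B) = c • 1`, so `B` is a scalar. A nonzero
scalar `B` puts `1` into the space, and then every `T = 1* T` is a scalar, i.e. the space is `ℂ • 1`.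
-/

section

variable {H : Type*} [NormedAddCommGroup H] [InnerProductSpace ℂ H]

def IsMISpace (S : Submodule ℂ (H →L[ℂ] H)) : Prop :=
  ∀ T ∈ S, ScalarMultipleOfIsometry T

theorem ScalarMultipleOfIsometry.exists_inner_map_map {T : H →L[ℂ] H}
    (hT : ScalarMultipleOfIsometry T) : ∃ r : ℂ, ∀ x y, ⟪T x, T y⟫ = r * ⟪x, y⟫ := by
  obtain ⟨c, V, hV, rfl⟩ := hT
  have hVinner := (LinearMap.norm_map_iff_inner_map_map V).mp
    (hV.norm_map_of_map_zero (map_zero V))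
  exact ⟨starRingEnd ℂ c * c, fun x y => by
    simp only [smul_apply, inner_smul_left, inner_smul_right, hVinner]
    ring⟩

theorem ContinuousLinearMap.eq_smul_one_of_inner_apply {B : H →L[ℂ] H} {c : ℂ}
    (h : ∀ x y, ⟪x, B y⟫ = c * ⟪x, y⟫) : B = c • 1 := by
  ext y
  refine ext_inner_left ℂ fun x => ?_
  simp [h, inner_smul_right]

namespace IsMISpace

variable {S : Submodule ℂ (H →L[ℂ] H)}

theorem exists_inner_apply_apply (hS : IsMISpace S) {T U : H →L[ℂ] H} (hT : T ∈ S)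
    (hU : U ∈ S) : ∃ c : ℂ, ∀ x y, ⟪T x, U y⟫ = c * ⟪x, y⟫ := by
  obtain ⟨a, ha⟩ := (hS T hT).exists_inner_map_map
  obtain ⟨b, hb⟩ := (hS U hU).exists_inner_map_map
  obtain ⟨s, hs⟩ := (hS _ (S.add_mem hT hU)).exists_inner_map_map
  obtain ⟨t, ht⟩ := (hS _ (S.add_mem hT (S.smul_mem Complex.I hU))).exists_inner_map_map
  refine ⟨(s - a - b - Complex.I * (t - a - b)) / 2, fun x y => ?_⟩
  have hsum := hs x y
  have hsumI := ht x y
  simp only [add_apply, smul_apply, inner_add_left, inner_add_right, inner_smul_left,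
    inner_smul_right, Complex.conj_I, ha, hb] at hsum hsumI
  linear_combination hsum / 2 - Complex.I * hsumI / 2
    + (⟪T x, U y⟫ - ⟪U x, T y⟫ - Complex.I * b * ⟪x, y⟫) / 2 * Complex.I_sq

theorem eq_smul_one_of_one_mem (hS : IsMISpace S) (h1 : (1 : H →L[ℂ] H) ∈ S) {T : H →L[ℂ] H}
    (hT : T ∈ S) : ∃ c : ℂ, T = c • 1 := by
  obtain ⟨c, hc⟩ := hS.exists_inner_apply_apply h1 hT
  exact ⟨c, ContinuousLinearMap.eq_smul_one_of_inner_apply hc⟩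

theorem eq_span_one_of_one_mem (hS : IsMISpace S) (h1 : (1 : H →L[ℂ] H) ∈ S) :
    S = Submodule.span ℂ {1} := by
  refine le_antisymm (fun T hT => ?_) ((Submodule.span_singleton_le_iff_mem _ _).mpr h1)
  obtain ⟨c, rfl⟩ := hS.eq_smul_one_of_one_mem h1 hT
  exact Submodule.smul_mem _ c (Submodule.mem_span_singleton_self 1)

theorem exists_eq_smul_one_of_mul_mem (hS : IsMISpace S) {A B : H →L[ℂ] H} (hA : A ∈ S)
    (hA0 : A ≠ 0) (hAB : A * B ∈ S) : ∃ μ : ℂ, B = μ • 1 := by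
  obtain ⟨a, ha⟩ := (hS A hA).exists_inner_map_map
  obtain ⟨c, hc⟩ := hS.exists_inner_apply_apply hA hAB
  have ha0 : a ≠ 0 := by
    rintro rfl
    refine hA0 (ContinuousLinearMap.ext fun x => ?_)
    simpa using ha x x
  refine ⟨c / a, ContinuousLinearMap.eq_smul_one_of_inner_apply fun x y => ?_⟩
  have hxy : a * ⟪x, B y⟫ = c * ⟪x, y⟫ := by rw [← ha, ← hc]; rfl
  field_simp
  linear_combination hxy

end IsMISpace

end

theorem stmt_13_general {H : Type*} [NormedAddCommGroup H] [InnerProductSpace ℂ H]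
    (S : Submodule ℂ (H →L[ℂ] H))
    (hS : ∀ T ∈ S, ScalarMultipleOfIsometry T)
    (hSne : S ≠ Submodule.span ℂ {(1 : H →L[ℂ] H)})
    (A B : H →L[ℂ] H) (hA : A ∈ S) (hB : B ∈ S) (hA0 : A ≠ 0) :
    A * B ∈ S ↔ B = 0 := by
  refine ⟨fun hAB => ?_, fun hB0 => by simp [hB0]⟩
  have hMI : IsMISpace S := hS
  obtain ⟨μ, rfl⟩ := hMI.exists_eq_smul_one_of_mul_mem hA hA0 hAB
  by_contra hB0
  have hμ : μ ≠ 0 := by rintro rfl; simp at hB0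
  have h1 : (1 : H →L[ℂ] H) ∈ S := by simpa [smul_smul, hμ] using S.smul_mem μ⁻¹ hB
  exact hSne (hMI.eq_span_one_of_one_mem h1)

theorem stmt_13 {H : Type*} [NormedAddCommGroup H] [InnerProductSpace ℂ H] [CompleteSpace H]
    (S : Submodule ℂ (H →L[ℂ] H))
    (hS : ∀ T ∈ S, ScalarMultipleOfIsometry T)
    (hSne : S ≠ Submodule.span ℂ {(1 : H →L[ℂ] H)})
    (A B : H →L[ℂ] H) (hA : A ∈ S) (hB : B ∈ S) (hA0 : A ≠ 0) :
    A * B ∈ S ↔ B = 0 :=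
  stmt_13_general S hS hSne A B hA hB hA0
end

section
/- (Commutator Identity) Let H be a complex Hilbert space and A, B ∈ B(H) operators for which there exist scalars a, b, c ∈ ℂ with A*A = a·I, B*B = b·I, and B*A = c·I. Then the commutator [A,B] = AB − BA satisfies [A,B]*[A,B] = 2(ab − |c|²)·I. In particular, for A, B in an MI-space S with inner product ⟨A,B⟩ defined by B*A = ⟨A,B⟩·I, one has [A,B]*[A,B] = 2(‖A‖²‖B‖² − |⟨A,B⟩|²)·I, since a = ‖A‖² and b = ‖B‖². -/
/-! Expanding `star [A, B] * [A, B]` gives four products of the form `star (X * Y) * (Z * W)`,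
each of which collapses to a scalar because `star X * Z` and `star Y * W` are scalars. The mixed
terms contribute `star c * c` and `c * star c`, which coincide over a commutative scalar ring. -/

section StarAlgebra

variable {𝕜 R : Type*} [CommRing 𝕜] [Ring R] [StarRing R] [Algebra 𝕜 R]

theorem star_mul_mul_eq_smul_one {A B C D : R} {x y : 𝕜} (hAC : star A * C = x • 1)
    (hBD : star B * D = y • 1) : star (A * B) * (C * D) = (x * y) • 1 := by
  calc star (A * B) * (C * D) = star B * (star A * C) * D := by simp only [star_mul, mul_assoc]
    _ = x • (star B * D) := by rw [hAC, mul_smul_comm, mul_one, smul_mul_assoc]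
    _ = (x * y) • 1 := by rw [hBD, smul_smul]

variable [StarRing 𝕜] [StarModule 𝕜 R]

theorem star_mul_eq_smul_one_of_star_mul_eq {A B : R} {c : 𝕜} (h : star B * A = c • 1) :
    star A * B = star c • 1 := by
  simpa only [star_mul, star_star, star_smul, star_one] using congrArg star h

theorem star_commutator_mul_commutator {A B : R} {a b c : 𝕜} (ha : star A * A = a • 1)
    (hb : star B * B = b • 1) (hc : star B * A = c • 1) :
    star (A * B - B * A) * (A * B - B * A) = (2 * (a * b - star c * c)) • 1 := by
  have hc' := star_mul_eq_smul_one_of_star_mul_eq hc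
  rw [star_sub, sub_mul, mul_sub, mul_sub, star_mul_mul_eq_smul_one ha hb,
    star_mul_mul_eq_smul_one hc' hc, star_mul_mul_eq_smul_one hc hc',
    star_mul_mul_eq_smul_one hb ha, ← sub_smul, ← sub_smul, ← sub_smul]
  congr 1
  ring

end StarAlgebra

theorem stmt_15 {H : Type*} [NormedAddCommGroup H] [InnerProductSpace ℂ H] [CompleteSpace H]
    (A B : H →L[ℂ] H) (a b c : ℂ)
    (ha : ContinuousLinearMap.adjoint A * A = a • (1 : H →L[ℂ] H))
    (hb : ContinuousLinearMap.adjoint B * B = b • (1 : H →L[ℂ] H))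
    (hc : ContinuousLinearMap.adjoint B * A = c • (1 : H →L[ℂ] H)) :
    ContinuousLinearMap.adjoint (A * B - B * A) * (A * B - B * A) =
      (2 * (a * b - (‖c‖ : ℂ) ^ 2)) • (1 : H →L[ℂ] H) := by
  simp only [← ContinuousLinearMap.star_eq_adjoint] at ha hb hc ⊢
  rw [star_commutator_mul_commutator ha hb hc, Complex.star_def, Complex.conj_mul']
end
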